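/- arXiv:2411.14090 — 2 statements merged into one kernel-verified Lean document; each statement's English description precedes it below -/
import Mathlib

section
/- Let (P, d) be the space of probability measures with finite first moment under the L^1-Wasserstein distance. Suppose Γ: P → P satisfies: there exist constants c₀ ≥ 1, λ₀ > 0 such that for every μ, the measure Γ(μ) satisfies W₁((P_t^μ)*η, Γ(μ)) ≤ c₀ e^{-λ₀ t} W₁(η, Γ(μ)) for all t ≥ 0 and η, and there is a continuous G: [0,∞) → [0,∞) with inf_{t > (log c₀)/λ₀} G(t)/(1 - c₀ e^{-λ₀ t}) < 1 such that W₁((P_t^{μ₁})* Γ(μ₂), Γ(μ₂)) ≤ G(t) W₁(μ₁, μ₂) for all t ≥ 0 and μ₁, μ₂. Then W₁(Γ(μ₁), Γ(μ₂)) ≤ (inf_{t > (log c₀)/λ₀} G(t)/(1 - c₀ e^{-λ₀ t})) · W₁(μ₁, μ₂), i.e., Γ is a contraction, and hence Γ has a unique fixed point μ* in P. -/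
/-!
For `t` past `log c₀ / λ₀` the map `P μ₁ t` moves every point closer to `Γ μ₁` by the factor
`q = c₀ e^{-λ₀ t} < 1`. Applying it to `Γ μ₂` and using the triangle inequality through
`P μ₁ t (Γ μ₂)` gives `(1 - q) d(Γ μ₁, Γ μ₂) ≤ G(t) d(μ₁, μ₂)`. Taking the infimum over `t`
shows that `Γ` is a contraction, and Banach's fixed point theorem finishes the proof.
-/

theorem dist_le_div_one_sub_of_dist_map_le {X : Type*} [PseudoMetricSpace X] {F : X → X}
    {a b : X} {q δ : ℝ} (hq : q < 1) (hF : dist (F b) a ≤ q * dist b a)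
    (hδ : dist (F b) b ≤ δ) : dist a b ≤ δ / (1 - q) := by
  rw [dist_comm b a] at hF
  rw [le_div_iff₀ (sub_pos.mpr hq)]
  have htri : dist a b ≤ dist (F b) a + dist (F b) b := dist_triangle_left a b (F b)
  nlinarith

theorem mul_exp_neg_mul_lt_one {c lam t : ℝ} (hc : 0 < c) (hlam : 0 < lam)
    (ht : Real.log c / lam < t) : c * Real.exp (-lam * t) < 1 := by
  rw [div_lt_iff₀ hlam] at ht
  calc c * Real.exp (-lam * t) = Real.exp (Real.log c - lam * t) := by
        rw [sub_eq_add_neg, Real.exp_add, Real.exp_log hc, neg_mul]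
    _ < 1 := Real.exp_lt_one_iff.mpr (by linarith)

theorem le_sInf_mul_of_forall_le_mul {S : Set ℝ} (hS : S.Nonempty) {a d : ℝ} (hd : 0 ≤ d)
    (h : ∀ x ∈ S, a ≤ x * d) : a ≤ sInf S * d := by
  rcases hd.eq_or_lt with rfl | hd
  · obtain ⟨x, hx⟩ := hS
    simpa using h x hx
  · rw [← div_le_iff₀ hd]
    exact le_csInf hS fun x hx => (div_le_iff₀ hd).mpr (h x hx)

theorem existsUnique_fixed_of_dist_le_mul {X : Type*} [MetricSpace X] [CompleteSpace X]
    [Nonempty X] {f : X → X} {r : ℝ} (hr : r < 1)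
    (hf : ∀ x y, dist (f x) (f y) ≤ r * dist x y) : ∃! x, f x = x := by
  have hK : ContractingWith r.toNNReal f := by
    refine ⟨Real.toNNReal_lt_one.mpr hr, LipschitzWith.of_dist_le_mul fun x y => ?_⟩
    exact (hf x y).trans (mul_le_mul_of_nonneg_right (Real.le_coe_toNNReal r) dist_nonneg)
  exact ⟨hK.fixedPoint, hK.fixedPoint_isFixedPt, fun y hy => hK.fixedPoint_unique hy⟩

theorem stmt0_general
    {X : Type*} [MetricSpace X] [CompleteSpace X] [Nonempty X]
    (P : X → ℝ → X → X) (Γ : X → X)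
    (c₀ lam0 : ℝ) (hc₀ : 1 ≤ c₀) (hlam0 : 0 < lam0)
    (hcontr : ∀ μ η : X, ∀ t : ℝ, 0 ≤ t →
      dist (P μ t η) (Γ μ) ≤ c₀ * Real.exp (-lam0 * t) * dist η (Γ μ))
    (G : ℝ → ℝ)
    (hG : ∀ μ₁ μ₂ : X, ∀ t : ℝ, 0 ≤ t →
      dist (P μ₁ t (Γ μ₂)) (Γ μ₂) ≤ G t * dist μ₁ μ₂)
    (r : ℝ)
    (hr : r = sInf {x : ℝ | ∃ t : ℝ, Real.log c₀ / lam0 < t ∧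
      x = G t / (1 - c₀ * Real.exp (-lam0 * t))})
    (hr1 : r < 1) :
    (∀ μ₁ μ₂ : X, dist (Γ μ₁) (Γ μ₂) ≤ r * dist μ₁ μ₂) ∧
      (∃! μstar : X, Γ μstar = μstar) := by
  have hthreshold : 0 ≤ Real.log c₀ / lam0 := div_nonneg (Real.log_nonneg hc₀) hlam0.le
  have hlip : ∀ μ₁ μ₂ : X, dist (Γ μ₁) (Γ μ₂) ≤ r * dist μ₁ μ₂ := by
    intro μ₁ μ₂
    rw [hr]
    refine le_sInf_mul_of_forall_le_mul ?_ dist_nonneg ?_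
    · exact ⟨_, Real.log c₀ / lam0 + 1, lt_add_one _, rfl⟩
    rintro _ ⟨t, ht, rfl⟩
    have ht0 : 0 ≤ t := hthreshold.trans ht.le
    rw [div_mul_eq_mul_div]
    exact dist_le_div_one_sub_of_dist_map_le
      (mul_exp_neg_mul_lt_one (by linarith) hlam0 ht) (hcontr μ₁ (Γ μ₂) t ht0) (hG μ₁ μ₂ t ht0)
  exact ⟨hlip, existsUnique_fixed_of_dist_le_mul hr1 hlip⟩

/-- Theorem 2.1(i), abstracted to a complete metric space: if each `Γ μ` is a fixed
point of the semigroup `P μ t` which is exponentially contracting towards `Γ μ`, and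
`W₁((P_t^{μ₁})* Γ(μ₂), Γ(μ₂)) ≤ G(t) W₁(μ₁, μ₂)` with
`inf_{t > log c₀ / lam0} G(t)/(1 - c₀ e^{-lam0 t}) < 1`, then `Γ` is a contraction with that
ratio and has a unique fixed point. -/
theorem stmt0
    {X : Type*} [MetricSpace X] [CompleteSpace X] [Nonempty X]
    (P : X → ℝ → X → X) (Γ : X → X)
    (c₀ lam0 : ℝ) (hc₀ : 1 ≤ c₀) (hlam0 : 0 < lam0)
    (hfix : ∀ μ : X, ∀ t : ℝ, 0 ≤ t → P μ t (Γ μ) = Γ μ)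
    (hcontr : ∀ μ η : X, ∀ t : ℝ, 0 ≤ t →
      dist (P μ t η) (Γ μ) ≤ c₀ * Real.exp (-lam0 * t) * dist η (Γ μ))
    (G : ℝ → ℝ) (hGcont : Continuous G) (hGnonneg : ∀ t, 0 ≤ t → 0 ≤ G t)
    (hG : ∀ μ₁ μ₂ : X, ∀ t : ℝ, 0 ≤ t →
      dist (P μ₁ t (Γ μ₂)) (Γ μ₂) ≤ G t * dist μ₁ μ₂)
    (r : ℝ)
    (hr : r = sInf {x : ℝ | ∃ t : ℝ, Real.log c₀ / lam0 < t ∧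
      x = G t / (1 - c₀ * Real.exp (-lam0 * t))})
    (hr0 : 0 ≤ r) (hr1 : r < 1) :
    (∀ μ₁ μ₂ : X, dist (Γ μ₁) (Γ μ₂) ≤ r * dist μ₁ μ₂) ∧
      (∃! μstar : X, Γ μstar = μstar) :=
  stmt0_general P Γ c₀ lam0 hc₀ hlam0 hcontr G hG r hr hr1
end

section
/- Let (X, d) be a metric space and for t ≥ 0 let P_t : X → X and Q_t : X → X be maps with the semigroup property P_{t+s} = P_t ∘ P_s. Let ν ∈ X satisfy Q_t ν = ν for all t. Assume there are constants c₀ ≥ 1, λ₀ > 0 with d(Q_t η, ν) ≤ c₀ e^{-λ₀ t} d(η, ν) for all η, t, and there are t₁ > 0 and a continuous H : [0, t₁] → [0,∞) with H(t₁) + c₀ e^{-λ₀ t₁} < 1 and d(P_t η, Q_t η) ≤ H(t) d(η, ν) for all η and t ∈ [0, t₁]. Then there exist constants c, λ > 0 such that d(P_t η, ν) ≤ c e^{-λ t} d(η, ν) for all t ≥ 0 and all η ∈ X. -/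
/-!
On `[0, t₁]` the triangle inequality through `Q_t η` gives
`d(P_t η, ν) ≤ (H(t) + c₀ e^{-λ₀ t}) d(η, ν)`: a uniform bound `K d(η, ν)` on the whole interval
and a strict contraction `r := H(t₁) + c₀ e^{-λ₀ t₁} < 1` at its right end. Writing
`t = s + n t₁` with `s ∈ [0, t₁]` and `n = ⌊t / t₁⌋`, the semigroup property gives
`P_t = P_s ∘ (P_{t₁})^[n]`, hence `d(P_t η, ν) ≤ K rⁿ d(η, ν)`, and `rⁿ ≤ e^{(log r / t₁) t} / r`.
-/

open Real Set

lemma pow_floor_div_le_exp {r : ℝ} (hr₀ : 0 < r) (hr₁ : r ≤ 1) (t τ : ℝ) :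
    r ^ ⌊t / τ⌋₊ ≤ exp (log r / τ * t) / r := by
  have hfloor : t / τ - 1 < ⌊t / τ⌋₊ := Nat.sub_one_lt_floor _
  calc r ^ ⌊t / τ⌋₊ = exp (⌊t / τ⌋₊ * log r) := by rw [exp_nat_mul, exp_log hr₀]
    _ ≤ exp ((t / τ - 1) * log r) :=
        exp_le_exp.2 (mul_le_mul_of_nonpos_right hfloor.le (log_nonpos hr₀.le hr₁))
    _ = exp (log r / τ * t) / r := by
        rw [show (t / τ - 1) * log r = log r / τ * t - log r by ring, exp_sub, exp_log hr₀]

lemma dist_iterate_le_pow_mul {X : Type*} [PseudoMetricSpace X] {f : X → X} {ν : X} {r : ℝ}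
    (hr : 0 ≤ r) (hf : ∀ η, dist (f η) ν ≤ r * dist η ν) (n : ℕ) (η : X) :
    dist (f^[n] η) ν ≤ r ^ n * dist η ν := by
  induction n with
  | zero => simp
  | succ n ih =>
    calc dist (f^[n + 1] η) ν = dist (f (f^[n] η)) ν := by rw [Function.iterate_succ_apply']
      _ ≤ r * (r ^ n * dist η ν) := (hf _).trans (mul_le_mul_of_nonneg_left ih hr)
      _ = r ^ (n + 1) * dist η ν := by ring

lemma semigroup_add_nat_mul_eq_comp_iterate {X : Type*} {P : ℝ → X → X}
    (hsemi : ∀ t s : ℝ, 0 ≤ t → 0 ≤ s → P (t + s) = P t ∘ P s) {τ s : ℝ} (hτ : 0 ≤ τ)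
    (hs : 0 ≤ s) (n : ℕ) : P (s + n * τ) = P s ∘ (P τ)^[n] := by
  induction n with
  | zero => simp
  | succ n ih =>
    rw [Nat.cast_succ, add_one_mul, ← add_assoc, hsemi _ _ (by positivity) hτ, ih,
      Function.iterate_succ, Function.comp_assoc]

theorem dist_semigroup_le_exp_of_bound_of_contraction {X : Type*} [PseudoMetricSpace X]
    {P : ℝ → X → X} {ν : X} (hsemi : ∀ t s : ℝ, 0 ≤ t → 0 ≤ s → P (t + s) = P t ∘ P s)
    {τ K r : ℝ} (hτ : 0 < τ) (hK : 0 ≤ K) (hr₀ : 0 < r) (hr₁ : r ≤ 1)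
    (hbound : ∀ η, ∀ s ∈ Icc 0 τ, dist (P s η) ν ≤ K * dist η ν)
    (hcontr : ∀ η, dist (P τ η) ν ≤ r * dist η ν) (η : X) {t : ℝ} (ht : 0 ≤ t) :
    dist (P t η) ν ≤ K / r * exp (log r / τ * t) * dist η ν := by
  set n := ⌊t / τ⌋₊
  have hnτ : n * τ ≤ t := (le_div_iff₀ hτ).1 (Nat.floor_le (div_nonneg ht hτ.le))
  have hτn : t < (n + 1) * τ := (div_lt_iff₀ hτ).1 (Nat.lt_floor_add_one _)
  have hdecomp : P t = P (t - n * τ) ∘ (P τ)^[n] := by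
    rw [← semigroup_add_nat_mul_eq_comp_iterate hsemi hτ.le (sub_nonneg.2 hnτ), sub_add_cancel]
  calc dist (P t η) ν ≤ K * dist ((P τ)^[n] η) ν := by
        rw [hdecomp]
        exact hbound _ _ ⟨sub_nonneg.2 hnτ, by linarith⟩
    _ ≤ K * (r ^ n * dist η ν) :=
        mul_le_mul_of_nonneg_left (dist_iterate_le_pow_mul hr₀.le hcontr n η) hK
    _ ≤ K * (exp (log r / τ * t) / r * dist η ν) := by
        gcongr
        exact pow_floor_div_le_exp hr₀ hr₁ t τ
    _ = K / r * exp (log r / τ * t) * dist η ν := by ring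

theorem stmt1_general
    {X : Type*} [MetricSpace X]
    (P Q : ℝ → X → X) (ν : X)
    (hsemi : ∀ t s : ℝ, 0 ≤ t → 0 ≤ s → P (t + s) = P t ∘ P s)
    (c₀ lam0 : ℝ) (hc₀ : 1 ≤ c₀)
    (hQ : ∀ η : X, ∀ t : ℝ, 0 ≤ t →
      dist (Q t η) ν ≤ c₀ * Real.exp (-lam0 * t) * dist η ν)
    (t₁ : ℝ) (ht₁ : 0 < t₁)
    (H : ℝ → ℝ) (hHcont : ContinuousOn H (Set.Icc 0 t₁))
    (hHnonneg : ∀ t ∈ Set.Icc (0:ℝ) t₁, 0 ≤ H t)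
    (hsmall : H t₁ + c₀ * Real.exp (-lam0 * t₁) < 1)
    (hPQ : ∀ η : X, ∀ t ∈ Set.Icc (0:ℝ) t₁, dist (P t η) (Q t η) ≤ H t * dist η ν) :
    ∃ c lam : ℝ, 0 < c ∧ 0 < lam ∧
      ∀ η : X, ∀ t : ℝ, 0 ≤ t → dist (P t η) ν ≤ c * Real.exp (-lam * t) * dist η ν := by
  set g : ℝ → ℝ := fun t => H t + c₀ * exp (-lam0 * t)
  have hg : ∀ η, ∀ t ∈ Icc 0 t₁, dist (P t η) ν ≤ g t * dist η ν := fun η t ht =>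
    calc dist (P t η) ν ≤ dist (P t η) (Q t η) + dist (Q t η) ν := dist_triangle _ _ _
      _ ≤ H t * dist η ν + c₀ * exp (-lam0 * t) * dist η ν :=
          add_le_add (hPQ η t ht) (hQ η t ht.1)
      _ = g t * dist η ν := by ring
  have ht₁_mem : t₁ ∈ Icc 0 t₁ := right_mem_Icc.2 ht₁.le
  have hr₀ : 0 < g t₁ := add_pos_of_nonneg_of_pos (hHnonneg t₁ ht₁_mem) (by positivity)
  obtain ⟨C, hC⟩ := isCompact_Icc.exists_bound_of_continuousOn
    (hHcont.add (by fun_prop) : ContinuousOn g (Icc 0 t₁))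
  have hgC : ∀ t ∈ Icc 0 t₁, g t ≤ C := fun t ht => (le_abs_self _).trans (hC t ht)
  have hC₀ : 0 < C := hr₀.trans_le (hgC t₁ ht₁_mem)
  refine ⟨C / g t₁, -log (g t₁) / t₁, by positivity,
    div_pos (neg_pos.2 (log_neg hr₀ hsmall)) ht₁, fun η t ht => ?_⟩
  rw [neg_div, neg_neg]
  refine dist_semigroup_le_exp_of_bound_of_contraction hsemi ht₁ hC₀.le hr₀ hsmall.le
    (fun η s hs => (hg η s hs).trans ?_) (fun η => hg η t₁ ht₁_mem) η ht
  exact mul_le_mul_of_nonneg_right (hgC s hs) dist_nonneg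

/-- Theorem 2.1(ii), abstract form: if `Q` is an exponentially contracting semigroup with
invariant point `ν`, `P` has the semigroup property and stays close to `Q` on `[0, t₁]`
with `H(t₁) + c₀ e^{-λ₀ t₁} < 1`, then `P_t η` converges exponentially fast to `ν`. -/
theorem stmt1
    {X : Type*} [MetricSpace X]
    (P Q : ℝ → X → X) (ν : X)
    (hsemi : ∀ t s : ℝ, 0 ≤ t → 0 ≤ s → P (t + s) = P t ∘ P s)
    (hinv : ∀ t : ℝ, 0 ≤ t → Q t ν = ν)
    (c₀ lam0 : ℝ) (hc₀ : 1 ≤ c₀) (hlam0 : 0 < lam0)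
    (hQ : ∀ η : X, ∀ t : ℝ, 0 ≤ t →
      dist (Q t η) ν ≤ c₀ * Real.exp (-lam0 * t) * dist η ν)
    (t₁ : ℝ) (ht₁ : 0 < t₁)
    (H : ℝ → ℝ) (hHcont : ContinuousOn H (Set.Icc 0 t₁))
    (hHnonneg : ∀ t ∈ Set.Icc (0:ℝ) t₁, 0 ≤ H t)
    (hsmall : H t₁ + c₀ * Real.exp (-lam0 * t₁) < 1)
    (hPQ : ∀ η : X, ∀ t ∈ Set.Icc (0:ℝ) t₁, dist (P t η) (Q t η) ≤ H t * dist η ν) :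
    ∃ c lam : ℝ, 0 < c ∧ 0 < lam ∧
      ∀ η : X, ∀ t : ℝ, 0 ≤ t → dist (P t η) ν ≤ c * Real.exp (-lam * t) * dist η ν :=
  stmt1_general P Q ν hsemi c₀ lam0 hc₀ hQ t₁ ht₁ H hHcont hHnonneg hsmall hPQ
end
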